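/- arXiv:1004.1620 — 4 statements merged into one kernel-verified Lean document; each statement's English description precedes it below -/
import Mathlib

section
/- Let Q and R be subgroups of P, let φ and φ' be two distinct elements of F(Q,R), let {Q_i}_{i∈I} and {R_i}_{i∈I} be finite families of subgroups of P and, for each i ∈ I, let φ_i and φ'_i be two distinct elements of F(Q_i,R_i), μ_i ∈ F(Q,Q_i) and ν_i ∈ F(R_i,R). If φ' − φ = Σ_{i∈I} μ_i∘(φ'_i − φ_i)∘ν_i holds in ℤF(Q,R), then there exist n ∈ ℕ and an injective map σ: {0,1,…,n} → I such that φ = μ_{σ(0)}∘φ_{σ(0)}∘ν_{σ(0)}, μ_{σ(ℓ−1)}∘φ'_{σ(ℓ−1)}∘ν_{σ(ℓ−1)} = μ_{σ(ℓ)}∘φ_{σ(ℓ)}∘ν_{σ(ℓ)} for every 1 ≤ ℓ ≤ n, and μ_{σ(n)}∘φ'_{σ(n)}∘ν_{σ(n)} = φ'. -/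
namespace Puig

variable {G : Type*} [Group G]

/-- The conjugation morphism `x ↦ u x u⁻¹` from `R` to `Q`. -/
def conjMap {Q R : Subgroup G} (u : G) (h : ∀ x ∈ R, u * x * u⁻¹ ∈ Q) : ↥R →* ↥Q where
  toFun x := ⟨u * x * u⁻¹, h x x.2⟩
  map_one' := by ext; simp
  map_mul' x y := by ext; simp

/-- The data of a `P`-category: a set of morphisms for each pair of subgroups. -/
structure PCat (G : Type*) [Group G] where
  Hom : ∀ _Q _R : Subgroup G, Set (↥_R →* ↥_Q)

/-- `F` is a divisible `P`-category. -/
structure PCat.IsDivisible (F : PCat G) : Prop where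
  inj : ∀ ⦃Q R : Subgroup G⦄ ⦃φ : ↥R →* ↥Q⦄, φ ∈ F.Hom Q R → Function.Injective φ
  conj_mem : ∀ ⦃Q R : Subgroup G⦄ (u : G) (h : ∀ x ∈ R, u * x * u⁻¹ ∈ Q),
    conjMap u h ∈ F.Hom Q R
  comp_mem : ∀ ⦃Q R T : Subgroup G⦄ ⦃φ : ↥R →* ↥Q⦄ ⦃ψ : ↥T →* ↥R⦄,
    φ ∈ F.Hom Q R → ψ ∈ F.Hom R T → φ.comp ψ ∈ F.Hom Q T
  div : ∀ ⦃Q R T : Subgroup G⦄ ⦃φ : ↥R →* ↥Q⦄ (ψ : ↥T →* ↥R), φ ∈ F.Hom Q R →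
    (φ.comp ψ ∈ F.Hom Q T ↔ ψ ∈ F.Hom R T)

/-- The image `φ(Q) ≤ G` of a morphism `φ : Q → R` between subgroups of `G`. -/
def img {Q R : Subgroup G} (φ : ↥Q →* ↥R) : Subgroup G := φ.range.map R.subtype

/-- The corestriction `Q → φ(Q)` of a morphism `φ`. -/
def toImg {Q R : Subgroup G} (φ : ↥Q →* ↥R) : ↥Q →* ↥(img φ) where
  toFun x := ⟨(φ x : G), Subgroup.mem_map_of_mem R.subtype ⟨x, rfl⟩⟩
  map_one' := by ext; simp
  map_mul' x y := by ext; simp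

/-- Restriction of a morphism along an inclusion of subgroups. -/
def restrHom {A B C : Subgroup G} (ψ : ↥A →* ↥C) (h : B ≤ A) : ↥B →* ↥C :=
  ψ.comp (Subgroup.inclusion h)

/-- The inclusion morphism `ι_A^P : A → P`. -/
def inclP (A : Subgroup G) : ↥A →* ↥(⊤ : Subgroup G) := Subgroup.inclusion le_top

/-- The automorphism of `Q` induced by conjugation by `u ∈ N_G(Q)`. -/
def conjAut (Q : Subgroup G) (u : ↥(Subgroup.normalizer (Q : Set G))) : MulAut ↥Q where
  toFun x := ⟨(u : G) * x * (u : G)⁻¹, (Subgroup.mem_normalizer_iff.mp u.2 x).mp x.2⟩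
  invFun x := ⟨(u : G)⁻¹ * x * (u : G),
    (Subgroup.mem_normalizer_iff.mp u.2 ((u : G)⁻¹ * x * (u : G))).mpr
      (by simpa [mul_assoc] using x.2)⟩
  left_inv x := by ext; simp [mul_assoc]
  right_inv x := by ext; simp [mul_assoc]
  map_mul' x y := by ext; simp

/-- The homomorphism `N_G(Q) → Aut(Q)` given by conjugation. -/
def conjHomN (Q : Subgroup G) : ↥(Subgroup.normalizer (Q : Set G)) →* MulAut ↥Q where
  toFun := conjAut Q
  map_one' := by ext x; simp [conjAut]
  map_mul' u v := by ext x; simp [conjAut, mul_assoc]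

/-- `F_R(Q)`: the group of automorphisms of `Q` induced by conjugation by elements of `R`. -/
def conjF (R Q : Subgroup G) : Subgroup (MulAut ↥Q) :=
  (R.subgroupOf (Subgroup.normalizer (Q : Set G))).map (conjHomN Q)

/-- `F(Q)`: the group of `F`-automorphisms of `Q`. -/
def FAut (F : PCat G) (Q : Subgroup G) : Subgroup (MulAut ↥Q) :=
  Subgroup.closure {α : MulAut ↥Q | α.toMonoidHom ∈ F.Hom Q Q}

/-- `O_p(G)`: the largest normal `p`-subgroup of `G`. -/
def pCore (p : ℕ) (G : Type*) [Group G] : Subgroup G :=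
  sSup {H : Subgroup G | H.Normal ∧ IsPGroup p ↥H}

/-- `N_P^K(Q)`. -/
def NPK (Q : Subgroup G) (K : Subgroup (MulAut ↥Q)) : Subgroup G :=
  (K.comap (conjHomN Q)).map (Subgroup.normalizer (Q : Set G)).subtype

/-- `^φK`: the image of `K ≤ Aut Q` in `Aut (φ(Q))` under the isomorphism induced by `φ`. -/
def pushK {Q R : Subgroup G} (φ : ↥Q →* ↥R) (K : Subgroup (MulAut ↥Q)) :
    Subgroup (MulAut ↥(img φ)) :=
  Subgroup.closure {β | ∃ α ∈ K, ∀ x : ↥Q, β (toImg φ x) = toImg φ (α x)}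

/-- `φ*K'`: the pull-back of `K' ≤ Aut (φ(Q))` to `Aut Q` under the isomorphism induced by `φ`. -/
def pullK {Q R : Subgroup G} (φ : ↥Q →* ↥R) (K' : Subgroup (MulAut ↥(img φ))) :
    Subgroup (MulAut ↥Q) :=
  Subgroup.closure {α | ∃ β ∈ K', ∀ x : ↥Q, toImg φ (α x) = β (toImg φ x)}

/-- `Q` is fully `K`-normalized in `F`. -/
def FullyKNormalized (F : PCat G) (Q : Subgroup G) (K : Subgroup (MulAut ↥Q)) : Prop :=
  ∀ ψ ∈ F.Hom ⊤ (Q ⊔ NPK Q K),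
    img (restrHom ψ le_sup_right) =
      NPK (img (restrHom ψ le_sup_left)) (pushK (restrHom ψ le_sup_left) K)

/-- The triple `(Q, K, φ)` is extensile in `F`. -/
def Extensile (F : PCat G) (Q : Subgroup G) (K : Subgroup (MulAut ↥Q))
    (φ : ↥Q →* ↥(⊤ : Subgroup G)) : Prop :=
  ∃ ψ ∈ F.Hom ⊤ (Q ⊔ NPK Q K), ∃ χ : MulAut ↥Q, χ ∈ K ∧ χ.toMonoidHom ∈ F.Hom Q Q ∧
    ∀ u : ↥Q, restrHom ψ le_sup_left u = φ (χ u)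

/-- The Sylow condition: `F_P(P)` is a Sylow `p`-subgroup of `F(P)`. -/
def SylowCond (p : ℕ) (F : PCat G) : Prop :=
  ∃ S : Sylow p ↥(FAut F (⊤ : Subgroup G)),
    (S : Subgroup ↥(FAut F (⊤ : Subgroup G))) =
      (conjF (⊤ : Subgroup G) (⊤ : Subgroup G)).subgroupOf (FAut F (⊤ : Subgroup G))

/-- The extension condition for a Frobenius `P`-category. -/
def ExtensionCond (F : PCat G) : Prop :=
  ∀ (Q : Subgroup G) (K : Subgroup (MulAut ↥Q)) (φ : ↥Q →* ↥(⊤ : Subgroup G)),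
    φ ∈ F.Hom ⊤ Q → FullyKNormalized F (img φ) (pushK φ K) → Extensile F Q K φ

/-- `F` is a Frobenius `P`-category. -/
def IsFrobenius (p : ℕ) (F : PCat G) : Prop :=
  F.IsDivisible ∧ SylowCond p F ∧ ExtensionCond F

/-- The free ℤ-module on all morphisms from `R` to `Q`. -/
abbrev Zmod (Q R : Subgroup G) : Type _ := (↥R →* ↥Q) →₀ ℤ

/-- Bilinear composition on the free ℤ-modules of morphisms. -/
noncomputable def dcomp {Q R T : Subgroup G} (a : Zmod Q R) (b : Zmod R T) : Zmod Q T :=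
  a.sum fun φ m => b.sum fun ψ n => Finsupp.single (φ.comp ψ) (m * n)

/-- `ℤF(Q,R)`: the free ℤ-module with basis `F(Q,R)`. -/
noncomputable def ZF (F : PCat G) (Q R : Subgroup G) : Submodule ℤ (Zmod Q R) :=
  Finsupp.supported ℤ ℤ (F.Hom Q R)

/-- `w_F(Q)`: the kernel of the augmentation `ℤF(P,Q) → ℤ`. -/
noncomputable def wF (F : PCat G) (Q : Subgroup G) : Submodule ℤ (Zmod (⊤ : Subgroup G) Q) :=
  ZF F ⊤ Q ⊓ LinearMap.ker (Finsupp.linearCombination ℤ fun _ => (1 : ℤ))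

/-- `r_F(Q) = w_F(P)∘ℤF(P,Q) + Σ_{|R|>|Q|} w_F(R)∘ℤF(R,Q)`. -/
noncomputable def rF (F : PCat G) (Q : Subgroup G) : Submodule ℤ (Zmod (⊤ : Subgroup G) Q) :=
  Submodule.span ℤ {x | ∃ R : Subgroup G, (R = ⊤ ∨ Nat.card ↥Q < Nat.card ↥R) ∧
    ∃ a ∈ wF F R, ∃ b ∈ ZF F R Q, x = dcomp a b}

/-- `Q` is `F`-essential. -/
def IsEssential (F : PCat G) (Q : Subgroup G) : Prop := rF F Q ≠ wF F Q

/-- `Q` is `F`-selfcentralizing. -/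
def SelfCentralizing (F : PCat G) (Q : Subgroup G) : Prop :=
  ∀ φ ∈ F.Hom (⊤ : Subgroup G) Q,
    Subgroup.centralizer (img φ : Set G) = (Subgroup.center ↥(img φ)).map (img φ).subtype

/-- `Q` is `F`-radical. -/
def Radical (p : ℕ) (F : PCat G) (Q : Subgroup G) : Prop :=
  SelfCentralizing F Q ∧ (pCore p ↥(FAut F Q)).map (FAut F Q).subtype = conjF Q Q

/-- `Q` is `F`-intersected. -/
def Intersected (F : PCat G) (Q : Subgroup G) : Prop :=
  SelfCentralizing F Q ∧
    conjF Q Q = ⨅ φ : ↥(F.Hom (⊤ : Subgroup G) Q), pullK φ.1 (conjF ⊤ (img φ.1))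

/-- The Alperin condition on `F`. -/
def AlperinCond (p : ℕ) (F : PCat G) : Prop :=
  ∀ Q : Subgroup G, IsEssential F Q → Radical p F Q ∧
    ∀ φ ∈ F.Hom (⊤ : Subgroup G) Q, ∀ φ' ∈ F.Hom (⊤ : Subgroup G) Q,
      ∃ σ ∈ F.Hom Q Q,
        Finsupp.single φ' (1 : ℤ) - Finsupp.single (φ.comp σ) 1 ∈ rF F Q

/-- The subgroup of `G` corresponding to a subgroup of a subgroup `N ≤ G`. -/
def liftSub {N : Subgroup G} (A : Subgroup ↥N) : Subgroup G := A.map N.subtype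

/-- The category `N_F^K(Q)` over the group `N_P^K(Q)`. -/
def NFK (F : PCat G) (Q : Subgroup G) (K : Subgroup (MulAut ↥Q)) : PCat ↥(NPK Q K) where
  Hom A B := {φ : ↥B →* ↥A | ∃ ψ ∈ F.Hom (Q ⊔ liftSub A) (Q ⊔ liftSub B), ∃ χ ∈ K,
    (∀ (x : G) (hxQ : x ∈ Q) (hx : x ∈ Q ⊔ liftSub B),
      ((ψ ⟨x, hx⟩ : ↥(Q ⊔ liftSub A)) : G) = ((χ ⟨x, hxQ⟩ : ↥Q) : G)) ∧
    (∀ (y : ↥B) (hy : ((y : ↥(NPK Q K)) : G) ∈ Q ⊔ liftSub B),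
      ((ψ ⟨((y : ↥(NPK Q K)) : G), hy⟩ : ↥(Q ⊔ liftSub A)) : G) =
        (((φ y : ↥A) : ↥(NPK Q K)) : G))}

/-- A generator family for `w_F`. -/
def GenFamily (F : PCat G) (S : ∀ Q : Subgroup G, Set (Zmod (⊤ : Subgroup G) Q)) : Prop :=
  (∀ Q : Subgroup G, Q ≠ ⊤ → S Q ⊆ (wF F Q : Set (Zmod (⊤ : Subgroup G) Q))) ∧
  ∀ Q : Subgroup G, Q ≠ ⊤ →
    wF F Q = Submodule.span ℤ {x | ∃ R : Subgroup G, R ≠ ⊤ ∧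
      ∃ a ∈ S R, ∃ φ ∈ F.Hom R Q, x = dcomp a (Finsupp.single φ (1 : ℤ))}

/-- `F^𝔛` is a partial Frobenius `P`-category. -/
def PartialFrobenius (p : ℕ) (F : PCat G) (X : Set (Subgroup G)) : Prop :=
  SylowCond p F ∧ ∀ Q ∈ X, ∀ (K : Subgroup (MulAut ↥Q)) (φ : ↥Q →* ↥(⊤ : Subgroup G)),
    φ ∈ F.Hom ⊤ Q → FullyKNormalized F (img φ) (pushK φ K) → Extensile F Q K φ

/-- The closure condition on the set of subgroups `𝔛`. -/
def XClosed (F : PCat G) (X : Set (Subgroup G)) : Prop :=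
  X.Nonempty ∧ ∀ Q : Subgroup G, (∃ R ∈ X, (F.Hom Q R).Nonempty) → Q ∈ X

end Puig

/-! Expanding the compositions turns the hypothesis into an identity
`[y] - [x] = ∑ i, ([b i] - [a i])` in the free ℤ-module on a set. Read each index `i` as an arrow
`a i ⟶ b i`. Evaluating at `x ≠ y` shows that some arrow starts at `x`; removing it leaves the same
kind of identity for its target and the remaining arrows, so induction on the number of arrows
produces a path from `x` to `y` that never repeats an arrow. -/

section ArrowPath

variable {α I : Type*}

/-- With index `i` read as an arrow `a i ⟶ b i`, `σ` lists the arrows of a path from `x` to `y`. -/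
def IsArrowPath (a b : I → α) (x y : α) {n : ℕ} (σ : Fin (n + 1) → I) : Prop :=
  a (σ 0) = x ∧ (∀ ℓ : Fin n, b (σ ℓ.castSucc) = a (σ ℓ.succ)) ∧ b (σ (Fin.last n)) = y

theorem isArrowPath_single {a b : I → α} {i : I} :
    IsArrowPath a b (a i) (b i) (fun _ : Fin 1 => i) :=
  ⟨rfl, fun ℓ => ℓ.elim0, rfl⟩

theorem IsArrowPath.cons {a b : I → α} {y : α} {n : ℕ} {σ : Fin (n + 1) → I} {i : I}
    (hσ : IsArrowPath a b (b i) y σ) : IsArrowPath a b (a i) y (Fin.cons i σ : Fin (n + 2) → I) := by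
  obtain ⟨h0, hstep, hlast⟩ := hσ
  refine ⟨rfl, fun ℓ => ?_, ?_⟩
  · cases ℓ using Fin.cases with
    | zero => simpa using h0.symm
    | succ ℓ => simpa only [← Fin.succ_castSucc, Fin.cons_succ] using hstep ℓ
  · simpa only [← Fin.succ_last, Fin.cons_succ] using hlast

open Finsupp in
theorem exists_mem_eq_of_single_sub_single_eq_sum {s : Finset I} {a b : I → α} {x y : α}
    (hxy : x ≠ y)
    (h : single y (1 : ℤ) - single x 1 = ∑ i ∈ s, (single (b i) 1 - single (a i) 1)) :
    ∃ i ∈ s, a i = x := by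
  classical
  by_contra! hne
  have hx := congrArg (· x) h
  have hstart : ∑ i ∈ s, single (a i) (1 : ℤ) x = 0 :=
    Finset.sum_eq_zero fun i hi => single_eq_of_ne (hne i hi).symm
  simp only [Finsupp.sub_apply, finsetSum_apply, Finset.sum_sub_distrib, hstart,
    single_eq_same, single_eq_of_ne hxy] at hx
  have hend : 0 ≤ ∑ i ∈ s, single (b i) (1 : ℤ) x :=
    Finset.sum_nonneg fun i _ => by rw [single_apply]; positivity
  omega

open Finsupp in
theorem exists_injective_isArrowPath_of_single_sub_single_eq_sum (s : Finset I) (a b : I → α)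
    {x y : α} (hxy : x ≠ y)
    (h : single y (1 : ℤ) - single x 1 = ∑ i ∈ s, (single (b i) 1 - single (a i) 1)) :
    ∃ (n : ℕ) (σ : Fin (n + 1) → I),
      Function.Injective σ ∧ (∀ ℓ, σ ℓ ∈ s) ∧ IsArrowPath a b x y σ := by
  classical
  induction s using Finset.strongInduction generalizing x with
  | H s ih =>
  obtain ⟨i, hi, rfl⟩ := exists_mem_eq_of_single_sub_single_eq_sum hxy h
  by_cases hby : b i = y
  · exact ⟨0, fun _ => i, Function.injective_of_subsingleton (α := Fin 1) _, fun _ => hi,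
      hby ▸ isArrowPath_single⟩
  have hrest : single y (1 : ℤ) - single (b i) 1 =
      ∑ j ∈ s.erase i, (single (b j) 1 - single (a j) 1) := by
    rw [← Finset.add_sum_erase s _ hi] at h
    rw [← sub_eq_iff_eq_add'.mpr h]
    abel
  obtain ⟨n, σ, hinj, hmem, hpath⟩ := ih _ (Finset.erase_ssubset hi) hby hrest
  refine ⟨n + 1, Fin.cons i σ, ?_, Fin.cases hi fun ℓ => ?_, hpath.cons⟩
  · exact Fin.cons_injective_iff.mpr ⟨fun ⟨ℓ, hℓ⟩ => Finset.ne_of_mem_erase (hmem ℓ) hℓ, hinj⟩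
  · simpa using Finset.mem_of_mem_erase (hmem ℓ)

end ArrowPath

namespace Puig

variable {G : Type*} [Group G]

theorem dcomp_single_single {Q R T : Subgroup G} (f : ↥R →* ↥Q) (g : ↥T →* ↥R) (m n : ℤ) :
    dcomp (Finsupp.single f m) (Finsupp.single g n) = Finsupp.single (f.comp g) (m * n) := by
  rw [dcomp, Finsupp.sum_single_index (by simp), Finsupp.sum_single_index (by simp)]

theorem dcomp_sub_left {Q R T : Subgroup G} (a a' : Zmod Q R) (b : Zmod R T) :
    dcomp (a - a') b = dcomp a b - dcomp a' b := by
  refine Finsupp.sum_sub_index fun f m m' => ?_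
  rw [← Finsupp.sum_sub]
  exact Finsupp.sum_congr fun g _ => by rw [sub_mul, Finsupp.single_sub]

theorem dcomp_sub_right {Q R T : Subgroup G} (a : Zmod Q R) (b b' : Zmod R T) :
    dcomp a (b - b') = dcomp a b - dcomp a b' := by
  rw [dcomp, dcomp, dcomp, ← Finsupp.sum_sub]
  refine Finsupp.sum_congr fun f _ => Finsupp.sum_sub_index fun g n n' => ?_
  rw [mul_sub, Finsupp.single_sub]

theorem dcomp_single_dimorphism_single {Q Q' R R' : Subgroup G} (μ : ↥Q' →* ↥Q)
    (f f' : ↥R' →* ↥Q') (ν : ↥R →* ↥R') :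
    dcomp (Finsupp.single μ (1 : ℤ)) (dcomp (Finsupp.single f' 1 - Finsupp.single f 1)
        (Finsupp.single ν 1)) =
      Finsupp.single (μ.comp (f'.comp ν)) 1 - Finsupp.single (μ.comp (f.comp ν)) 1 := by
  simp only [dcomp_sub_left, dcomp_sub_right, dcomp_single_single, mul_one]

theorem dimorphism_decomposition_chain_general
    {P : Type*} [Group P]
    {Q R : Subgroup P} {φ φ' : ↥R →* ↥Q}
    (hne : φ ≠ φ')
    {I : Type*} [Fintype I] (Qi Ri : I → Subgroup P)
    (φi φi' : ∀ i, ↥(Ri i) →* ↥(Qi i))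
    (μ : ∀ i, ↥(Qi i) →* ↥Q)
    (ν : ∀ i, ↥R →* ↥(Ri i))
    (heq : Finsupp.single φ' (1 : ℤ) - Finsupp.single φ 1 =
      ∑ i, dcomp (Finsupp.single (μ i) (1 : ℤ))
        (dcomp (Finsupp.single (φi' i) (1 : ℤ) - Finsupp.single (φi i) 1)
          (Finsupp.single (ν i) (1 : ℤ)))) :
    ∃ (n : ℕ) (σ : Fin (n + 1) → I), Function.Injective σ ∧
      φ = (μ (σ 0)).comp ((φi (σ 0)).comp (ν (σ 0))) ∧
      (∀ ℓ : Fin n,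
        (μ (σ ℓ.castSucc)).comp ((φi' (σ ℓ.castSucc)).comp (ν (σ ℓ.castSucc))) =
          (μ (σ ℓ.succ)).comp ((φi (σ ℓ.succ)).comp (ν (σ ℓ.succ)))) ∧
      (μ (σ (Fin.last n))).comp ((φi' (σ (Fin.last n))).comp (ν (σ (Fin.last n)))) = φ' := by
  simp only [dcomp_single_dimorphism_single] at heq
  obtain ⟨n, σ, hinj, -, h0, hstep, hlast⟩ :=
    exists_injective_isArrowPath_of_single_sub_single_eq_sum Finset.univ _ _ hne heq
  exact ⟨n, σ, hinj, h0.symm, hstep, hlast⟩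

/-- **Lemma 1.5** (the "only if" direction): a linear decomposition of an `F`-dimorphism into
`F`-dimorphisms yields an Alperin-type chain of equalities. -/
theorem dimorphism_decomposition_chain
    (p : ℕ) [Fact p.Prime] {P : Type*} [Group P] [Finite P] (hP : IsPGroup p P)
    (F : PCat P) (hF : F.IsDivisible)
    {Q R : Subgroup P} {φ φ' : ↥R →* ↥Q}
    (hφ : φ ∈ F.Hom Q R) (hφ' : φ' ∈ F.Hom Q R) (hne : φ ≠ φ')
    {I : Type*} [Fintype I] (Qi Ri : I → Subgroup P)
    (φi φi' : ∀ i, ↥(Ri i) →* ↥(Qi i))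
    (hφi : ∀ i, φi i ∈ F.Hom (Qi i) (Ri i)) (hφi' : ∀ i, φi' i ∈ F.Hom (Qi i) (Ri i))
    (hnei : ∀ i, φi i ≠ φi' i)
    (μ : ∀ i, ↥(Qi i) →* ↥Q) (hμ : ∀ i, μ i ∈ F.Hom Q (Qi i))
    (ν : ∀ i, ↥R →* ↥(Ri i)) (hν : ∀ i, ν i ∈ F.Hom (Ri i) R)
    (heq : Finsupp.single φ' (1 : ℤ) - Finsupp.single φ 1 =
      ∑ i, dcomp (Finsupp.single (μ i) (1 : ℤ))
        (dcomp (Finsupp.single (φi' i) (1 : ℤ) - Finsupp.single (φi i) 1)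
          (Finsupp.single (ν i) (1 : ℤ)))) :
    ∃ (n : ℕ) (σ : Fin (n + 1) → I), Function.Injective σ ∧
      φ = (μ (σ 0)).comp ((φi (σ 0)).comp (ν (σ 0))) ∧
      (∀ ℓ : Fin n,
        (μ (σ ℓ.castSucc)).comp ((φi' (σ ℓ.castSucc)).comp (ν (σ ℓ.castSucc))) =
          (μ (σ ℓ.succ)).comp ((φi (σ ℓ.succ)).comp (ν (σ ℓ.succ)))) ∧
      (μ (σ (Fin.last n))).comp ((φi' (σ (Fin.last n))).comp (ν (σ (Fin.last n)))) = φ' :=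
  dimorphism_decomposition_chain_general hne Qi Ri φi φi' μ ν heq

end Puig
end

section
/- Let F be a divisible P-category. If Q is an F-radical subgroup of P, then Q is an F-intersected subgroup of P. -/
namespace Puig

variable {G : Type*} [Group G]

/-! The intersection `K = ⋂_φ φ*F_P(φ(Q))` contains `F_Q(Q)`, lies in `F_P(Q)`
(take `φ` the inclusion), hence is a `p`-group of `F`-automorphisms, and it is normalized by `F(Q)`
because precomposing with `σ ∈ F(Q)` permutes the `F`-morphisms `Q → P`. So `K ≤ O_p(F(Q))`,
which is `F_Q(Q)` when `Q` is radical. -/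

theorem mem_conjF_iff {R Q : Subgroup G} {β : MulAut ↥Q} :
    β ∈ conjF R Q ↔ ∃ v ∈ R, v ∈ Subgroup.normalizer (Q : Set G) ∧
      ∀ y : ↥Q, ((β y : ↥Q) : G) = v * y * v⁻¹ := by
  constructor
  · rintro ⟨u, hu, rfl⟩
    exact ⟨u, Subgroup.mem_subgroupOf.mp hu, u.2, fun _ => rfl⟩
  · rintro ⟨v, hvR, hvN, hβ⟩
    exact ⟨⟨v, hvN⟩, Subgroup.mem_subgroupOf.mpr hvR,
      MulEquiv.ext fun y => Subtype.ext (hβ y).symm⟩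

theorem mem_pullK_iff {Q S : Subgroup G} {φ : ↥Q →* ↥S} {K' : Subgroup (MulAut ↥(img φ))}
    {α : MulAut ↥Q} :
    α ∈ pullK φ K' ↔ ∃ β ∈ K', ∀ x : ↥Q, toImg φ (α x) = β (toImg φ x) := by
  let T : Subgroup (MulAut ↥Q) :=
    { carrier := {α | ∃ β ∈ K', ∀ x : ↥Q, toImg φ (α x) = β (toImg φ x)}
      one_mem' := ⟨1, one_mem _, fun _ => rfl⟩
      mul_mem' := by
        rintro a b ⟨β, hβ, ha⟩ ⟨γ, hγ, hb⟩
        exact ⟨β * γ, mul_mem hβ hγ, fun x => (ha (b x)).trans (congrArg β (hb x))⟩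
      inv_mem' := by
        rintro a ⟨β, hβ, ha⟩
        refine ⟨β⁻¹, inv_mem hβ, fun x => β.injective ?_⟩
        rw [← ha]
        simp }
  exact ⟨fun h => (Subgroup.closure_le T).mpr subset_rfl h, fun h => Subgroup.subset_closure h⟩

theorem mem_pullK_conjF_iff {Q R S : Subgroup G} (φ : ↥Q →* ↥S) {α : MulAut ↥Q} :
    α ∈ pullK φ (conjF R (img φ)) ↔
      ∃ v ∈ R, v ∈ Subgroup.normalizer (img φ : Set G) ∧
        ∀ x : ↥Q, ((φ (α x) : ↥S) : G) = v * φ x * v⁻¹ := by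
  rw [mem_pullK_iff]
  constructor
  · rintro ⟨β, hβ, hαβ⟩
    obtain ⟨v, hvR, hvN, hv⟩ := mem_conjF_iff.mp hβ
    exact ⟨v, hvR, hvN, fun x => (congrArg Subtype.val (hαβ x)).trans (hv _)⟩
  · rintro ⟨v, hvR, hvN, hv⟩
    exact ⟨conjHomN (img φ) ⟨v, hvN⟩, mem_conjF_iff.mpr ⟨v, hvR, hvN, fun _ => rfl⟩,
      fun x => Subtype.ext (hv x)⟩

theorem conjF_self_le_pullK_conjF {Q S : Subgroup G} (φ : ↥Q →* ↥S) :
    conjF Q Q ≤ pullK φ (conjF S (img φ)) := by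
  intro α hα
  obtain ⟨u, huQ, -, hu⟩ := mem_conjF_iff.mp hα
  refine (mem_pullK_conjF_iff φ).mpr ⟨φ ⟨u, huQ⟩, (φ ⟨u, huQ⟩).2,
    Subgroup.le_normalizer (Subgroup.mem_map_of_mem _ ⟨_, rfl⟩), fun x => ?_⟩
  have hαx : α x = ⟨u, huQ⟩ * x * ⟨u, huQ⟩⁻¹ := Subtype.ext (hu x)
  rw [hαx, map_mul, map_mul, map_inv]
  rfl

theorem img_inclusion {Q S : Subgroup G} (h : Q ≤ S) : img (Subgroup.inclusion h) = Q := by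
  ext y
  simpa [img] using @h y

theorem pullK_inclusion_conjF_le {Q R S : Subgroup G} (h : Q ≤ S) :
    pullK (Subgroup.inclusion h) (conjF R (img (Subgroup.inclusion h))) ≤ conjF R Q := by
  intro α hα
  obtain ⟨v, hvR, hvN, hv⟩ := (mem_pullK_conjF_iff _).mp hα
  rw [img_inclusion] at hvN
  exact mem_conjF_iff.mpr ⟨v, hvR, hvN, hv⟩

theorem img_comp_mulAut {Q S : Subgroup G} (φ : ↥Q →* ↥S) (σ : MulAut ↥Q) :
    img (φ.comp σ.toMonoidHom) = img φ := by
  rw [img, img, MonoidHom.range_comp, MonoidHom.range_eq_top.mpr σ.surjective,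
    ← MonoidHom.range_eq_map]

theorem conj_mem_pullK_conjF_of_mem_comp {Q R S : Subgroup G} (φ : ↥Q →* ↥S)
    {σ α : MulAut ↥Q}
    (hα : α ∈ pullK (φ.comp σ.toMonoidHom) (conjF R (img (φ.comp σ.toMonoidHom)))) :
    σ * α * σ⁻¹ ∈ pullK φ (conjF R (img φ)) := by
  obtain ⟨v, hvR, hvN, hv⟩ := (mem_pullK_conjF_iff _).mp hα
  rw [img_comp_mulAut] at hvN
  refine (mem_pullK_conjF_iff φ).mpr ⟨v, hvR, hvN, fun x => ?_⟩
  simpa [MulAut.mul_apply] using hv (σ⁻¹ x)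

theorem isPGroup_conjF {p : ℕ} (hG : IsPGroup p G) (R Q : Subgroup G) :
    IsPGroup p ↥(conjF R Q) :=
  (hG.to_subgroup _).to_subgroup _ |>.map _

theorem le_map_pCore {p : ℕ} {H : Type*} [Group H] {A K : Subgroup H} (hKA : K ≤ A)
    (hK : ∀ a ∈ A, ∀ k ∈ K, a * k * a⁻¹ ∈ K) (hKp : IsPGroup p ↥K) :
    K ≤ (pCore p ↥A).map A.subtype := by
  have hnormal : (K.subgroupOf A).Normal :=
    ⟨fun k hk a => Subgroup.mem_subgroupOf.mpr (hK a a.2 k (Subgroup.mem_subgroupOf.mp hk))⟩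
  have hp : IsPGroup p ↥(K.subgroupOf A) := hKp.of_equiv (Subgroup.subgroupOfEquivOfLe hKA).symm
  have hle : K.subgroupOf A ≤ pCore p ↥A := le_sSup ⟨hnormal, hp⟩
  replace hle := Subgroup.map_mono (f := A.subtype) hle
  rwa [Subgroup.subgroupOf_map_subtype, inf_of_le_left hKA] at hle

namespace PCat.IsDivisible

variable {F : PCat G} (hF : F.IsDivisible)
include hF

theorem inclusion_mem {Q R : Subgroup G} (h : Q ≤ R) : Subgroup.inclusion h ∈ F.Hom R Q := by
  have h1 : ∀ x ∈ Q, (1 : G) * x * (1 : G)⁻¹ ∈ R := fun x hx => by simpa using h hx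
  convert hF.conj_mem 1 h1
  ext
  simp [conjMap]

theorem mem_FAut_iff {Q : Subgroup G} {α : MulAut ↥Q} :
    α ∈ FAut F Q ↔ α.toMonoidHom ∈ F.Hom Q Q := by
  have hid : (1 : MulAut ↥Q).toMonoidHom ∈ F.Hom Q Q := hF.inclusion_mem le_rfl
  let A : Subgroup (MulAut ↥Q) :=
    { carrier := {α | α.toMonoidHom ∈ F.Hom Q Q}
      one_mem' := hid
      mul_mem' := fun ha hb => hF.comp_mem ha hb
      inv_mem' := by
        intro a ha
        refine (hF.div a⁻¹.toMonoidHom ha).mp ?_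
        convert hid
        ext
        simp }
  exact ⟨fun h => (Subgroup.closure_le A).mpr subset_rfl h, fun h => Subgroup.subset_closure h⟩

theorem conjF_le_FAut (R Q : Subgroup G) : conjF R Q ≤ FAut F Q := by
  intro α hα
  obtain ⟨v, -, hvN, hv⟩ := mem_conjF_iff.mp hα
  have hvQ : ∀ x ∈ Q, v * x * v⁻¹ ∈ Q := fun x => (Subgroup.mem_normalizer_iff.mp hvN x).mp
  refine hF.mem_FAut_iff.mpr ?_
  convert hF.conj_mem v hvQ
  ext x
  exact hv x

end PCat.IsDivisible

/-- The group `⋂_{φ ∈ F(P,Q)} φ*F_P(φ(Q))` in the definition of `F`-intersected subgroups. -/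
def intersectedAut (F : PCat G) (Q : Subgroup G) : Subgroup (MulAut ↥Q) :=
  ⨅ φ : ↥(F.Hom (⊤ : Subgroup G) Q), pullK φ.1 (conjF ⊤ (img φ.1))

theorem conjF_self_le_intersectedAut (F : PCat G) (Q : Subgroup G) :
    conjF Q Q ≤ intersectedAut F Q :=
  le_iInf fun φ => conjF_self_le_pullK_conjF φ.1

section

variable {F : PCat G} (hF : F.IsDivisible)
include hF

theorem intersectedAut_le_conjF_top (Q : Subgroup G) : intersectedAut F Q ≤ conjF ⊤ Q :=
  (iInf_le (fun φ : ↥(F.Hom ⊤ Q) => pullK φ.1 (conjF ⊤ (img φ.1)))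
    ⟨Subgroup.inclusion le_top, hF.inclusion_mem le_top⟩).trans
    (pullK_inclusion_conjF_le le_top)

theorem intersectedAut_le_FAut (Q : Subgroup G) : intersectedAut F Q ≤ FAut F Q :=
  (intersectedAut_le_conjF_top hF Q).trans (hF.conjF_le_FAut ⊤ Q)

theorem conj_mem_intersectedAut {Q : Subgroup G} {σ α : MulAut ↥Q} (hσ : σ ∈ FAut F Q)
    (hα : α ∈ intersectedAut F Q) : σ * α * σ⁻¹ ∈ intersectedAut F Q :=
  Subgroup.mem_iInf.mpr fun φ => conj_mem_pullK_conjF_of_mem_comp φ.1 <|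
    Subgroup.mem_iInf.mp hα ⟨_, hF.comp_mem φ.2 (hF.mem_FAut_iff.mp hσ)⟩

end

theorem radical_is_intersected_general
    (p : ℕ) {P : Type*} [Group P] (hP : IsPGroup p P)
    (F : PCat P) (hF : F.IsDivisible)
    (Q : Subgroup P) (hQ : Radical p F Q) : Intersected F Q := by
  obtain ⟨hsc, hrad⟩ := hQ
  refine ⟨hsc, le_antisymm (conjF_self_le_intersectedAut F Q) ?_⟩
  have hp : IsPGroup p ↥(intersectedAut F Q) :=
    (isPGroup_conjF hP ⊤ Q).to_le (intersectedAut_le_conjF_top hF Q)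
  rw [← hrad]
  exact le_map_pCore (intersectedAut_le_FAut hF Q)
    (fun _ hσ _ hα => conj_mem_intersectedAut hF hσ hα) hp

/-- An `F`-radical subgroup of `P` is an `F`-intersected subgroup of `P`. -/
theorem radical_is_intersected
    (p : ℕ) [Fact p.Prime] {P : Type*} [Group P] [Finite P] (hP : IsPGroup p P)
    (F : PCat P) (hF : F.IsDivisible)
    (Q : Subgroup P) (hQ : Radical p F Q) : Intersected F Q :=
  radical_is_intersected_general p hP F hF Q hQ

end Puig
end

section
/- Let F be a divisible P-category, let Q be a subgroup of P fully normalized in F, set P' = N_P(Q) and F' = N_F(Q). Let R be a subgroup of P', J a subgroup of Aut(R) such that R is fully J-normalized in F', set T = Q·R, and let I be the subgroup of Aut(T) consisting of the automorphisms α with α(Q) = Q and α(R) = R whose restriction to R belongs to J. Then N_P^I(T) = N_{P'}^J(R); moreover, for any subgroups A and B of this common subgroup, an injective homomorphism φ: B → A belongs to N_F^I(T)(A,B) (morphisms defined with respect to (T,I) inside F) if and only if it belongs to N_{F'}^J(R)(A,B) (morphisms defined with respect to (R,J) inside F'). -/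
namespace Puig

variable {G : Type*} [Group G]

/-- The subgroup `I ≤ Aut(Q·R)` of automorphisms stabilizing `Q` and `R` and acting on `R`
via elements of `J`. -/
def stabAut {G : Type*} [Group G] {N : Subgroup G} (Q : Subgroup G) (R : Subgroup ↥N)
    (J : Subgroup (MulAut ↥R)) : Subgroup (MulAut ↥(Q ⊔ liftSub R)) :=
  Subgroup.closure {α |
    (Q.subgroupOf (Q ⊔ liftSub R)).map α.toMonoidHom = Q.subgroupOf (Q ⊔ liftSub R) ∧
    ((liftSub R).subgroupOf (Q ⊔ liftSub R)).map α.toMonoidHom =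
      (liftSub R).subgroupOf (Q ⊔ liftSub R) ∧
    ∃ j ∈ J, ∀ (x : ↥N) (hx : x ∈ R) (hx' : (x : G) ∈ Q ⊔ liftSub R),
      ((α ⟨(x : G), hx'⟩ : ↥(Q ⊔ liftSub R)) : G) = (((j ⟨x, hx⟩ : ↥R) : ↥N) : G)}

/-!
Morphisms between subgroups are compared through their graphs in `P × P`: "ψ extends χ" becomes
an inclusion of graphs, whichever ambient group (`P`, `N_P(Q)` or `N_{P'}^J(R)`) the subgroups
live in.

An automorphism of `T = Q·R` lies in `I` iff it restricts to an automorphism of `Q` and to an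
element of `J` on `R`. Conversely, an injective morphism restricting to automorphisms of `Q` and of
`R` restricts to one of `T`, since it maps `Q ⊔ R` onto `Q ⊔ R`. Hence both `N_F^I(T)(A,B)` and
`N_{F'}^J(R)(A,B)` consist of the restrictions of the `F`-morphisms `T·B → T·A` that act on `Q` as
an automorphism and on `R` as an element of `J`; the same description for conjugations by elements
of `P` gives `N_P^I(T) = N_{P'}^J(R)`.
-/

lemma subset_of_dom_subset {α : Type*} {R₁ R₂ H : SetRel α α}
    (hH : ∀ ⦃a b c⦄, (a, b) ∈ H → (a, c) ∈ H → b = c) (h₁ : R₁ ⊆ H) (h₂ : R₂ ⊆ H)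
    (hdom : R₁.dom ⊆ R₂.dom) : R₁ ⊆ R₂ := by
  rintro ⟨a, b⟩ hab
  obtain ⟨c, hac⟩ := hdom ⟨b, hab⟩
  rwa [hH (h₁ hab) (h₂ hac)]

section Graph

variable {G : Type*} [Group G] {S S' X Y : Subgroup G}

def graph (f : ↥X →* ↥Y) : SetRel G G :=
  Set.range fun x : ↥X => ((x : G), (f x : G))

lemma mem_graph {f : ↥X →* ↥Y} {a b : G} :
    (a, b) ∈ graph f ↔ ∃ ha : a ∈ X, (f ⟨a, ha⟩ : G) = b := by
  constructor
  · rintro ⟨x, hx⟩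
    cases hx
    exact ⟨x.2, rfl⟩
  · rintro ⟨ha, rfl⟩
    exact ⟨⟨a, ha⟩, rfl⟩

lemma eq_of_mem_graph {f : ↥X →* ↥Y} {a b c : G} (hb : (a, b) ∈ graph f)
    (hc : (a, c) ∈ graph f) : b = c := by
  obtain ⟨_, rfl⟩ := mem_graph.mp hb
  obtain ⟨_, rfl⟩ := mem_graph.mp hc
  rfl

lemma dom_graph (f : ↥X →* ↥Y) : (graph f).dom = X := by
  ext a
  simp only [SetRel.mem_dom, mem_graph, SetLike.mem_coe]
  exact ⟨fun ⟨_, ha, _⟩ => ha, fun ha => ⟨_, ha, rfl⟩⟩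

lemma graph_subset_graph_iff {f : ↥S →* ↥S'} {ψ : ↥X →* ↥Y} (hSX : S ≤ X) :
    graph f ⊆ graph ψ ↔
      ∀ (x : G) (hxS : x ∈ S) (hx : x ∈ X), (ψ ⟨x, hx⟩ : G) = f ⟨x, hxS⟩ := by
  constructor
  · intro h x hxS hx
    obtain ⟨_, hψ⟩ := mem_graph.mp (h (mem_graph.mpr ⟨hxS, rfl⟩))
    exact hψ
  · rintro h ⟨a, b⟩ hab
    obtain ⟨ha, rfl⟩ := mem_graph.mp hab
    exact mem_graph.mpr ⟨hSX ha, h a ha (hSX ha)⟩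

lemma graph_mul (α β : MulAut ↥X) :
    graph (α * β).toMonoidHom = (graph β.toMonoidHom).comp (graph α.toMonoidHom) := by
  ext ⟨a, c⟩
  simp only [SetRel.mem_comp, mem_graph]
  constructor
  · rintro ⟨ha, rfl⟩
    exact ⟨_, ⟨ha, rfl⟩, (β ⟨a, ha⟩).2, rfl⟩
  · rintro ⟨b, ⟨ha, rfl⟩, hb, rfl⟩
    exact ⟨ha, rfl⟩

lemma graph_inv (α : MulAut ↥X) : graph α⁻¹.toMonoidHom = (graph α.toMonoidHom).inv := by
  ext ⟨a, b⟩
  simp only [SetRel.mem_inv, mem_graph]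
  constructor
  · rintro ⟨ha, rfl⟩
    exact ⟨(α⁻¹ ⟨a, ha⟩).2, by simp⟩
  · rintro ⟨hb, rfl⟩
    exact ⟨(α ⟨b, hb⟩).2, by simp⟩

lemma graph_one_subset (hST : S ≤ X) :
    graph (1 : MulAut ↥S).toMonoidHom ⊆ graph (1 : MulAut ↥X).toMonoidHom :=
  (graph_subset_graph_iff hST).mpr fun _ _ _ => rfl

end Graph

section Restricts

variable {G : Type*} [Group G] {S T X Y : Subgroup G}

def RestrictsTo (ψ : ↥X →* ↥Y) (S : Subgroup G) (K : Subgroup (MulAut ↥S)) : Prop :=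
  ∃ χ ∈ K, graph χ.toMonoidHom ⊆ graph ψ

def imageIn (ψ : ↥X →* ↥Y) (S : Subgroup G) : Subgroup G :=
  (S.subgroupOf X).map (Y.subtype.comp ψ)

lemma mem_imageIn {ψ : ↥X →* ↥Y} {b : G} : b ∈ imageIn ψ S ↔ ∃ a ∈ S, (a, b) ∈ graph ψ := by
  simp only [imageIn, Subgroup.mem_map, Subgroup.mem_subgroupOf, mem_graph]
  constructor
  · rintro ⟨x, hx, rfl⟩
    exact ⟨x, hx, x.2, rfl⟩
  · rintro ⟨a, ha, haX, rfl⟩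
    exact ⟨⟨a, haX⟩, ha, rfl⟩

lemma imageIn_sup (ψ : ↥X →* ↥Y) {S₁ S₂ : Subgroup G} (h₁ : S₁ ≤ X) (h₂ : S₂ ≤ X) :
    imageIn ψ (S₁ ⊔ S₂) = imageIn ψ S₁ ⊔ imageIn ψ S₂ := by
  rw [imageIn, Subgroup.subgroupOf_sup h₁ h₂, Subgroup.map_sup]
  rfl

lemma imageIn_le {ψ : ↥X →* ↥Y} {S' : Subgroup G} {Γ : SetRel G G} (hΓ : Γ ⊆ graph ψ)
    (hS : ∀ a ∈ S, ∃ b ∈ S', (a, b) ∈ Γ) : imageIn ψ S ≤ S' := by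
  intro b hb
  obtain ⟨a, ha, hab⟩ := mem_imageIn.mp hb
  obtain ⟨b', hb', hab'⟩ := hS a ha
  rwa [eq_of_mem_graph hab (hΓ hab')]

lemma RestrictsTo.le {ψ : ↥X →* ↥Y} {K : Subgroup (MulAut ↥S)} (h : RestrictsTo ψ S K) :
    S ≤ X := by
  obtain ⟨χ, -, hχ⟩ := h
  have := SetRel.dom_mono hχ
  rwa [dom_graph, dom_graph] at this

lemma RestrictsTo.imageIn_eq {ψ : ↥X →* ↥Y} {K : Subgroup (MulAut ↥S)} (h : RestrictsTo ψ S K) :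
    imageIn ψ S = S := by
  obtain ⟨χ, -, hχ⟩ := h
  ext b
  rw [mem_imageIn]
  constructor
  · rintro ⟨a, ha, hab⟩
    rw [eq_of_mem_graph hab (hχ (mem_graph.mpr ⟨ha, rfl⟩))]
    exact (χ ⟨a, ha⟩).2
  · intro hb
    refine ⟨_, (χ⁻¹ ⟨b, hb⟩).2, hχ (mem_graph.mpr ⟨(χ⁻¹ ⟨b, hb⟩).2, ?_⟩)⟩
    simp

lemma RestrictsTo.mono {ψ : ↥X →* ↥Y} {K K' : Subgroup (MulAut ↥S)} (h : RestrictsTo ψ S K)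
    (hK : K ≤ K') : RestrictsTo ψ S K' :=
  let ⟨χ, hχK, hχ⟩ := h
  ⟨χ, hK hχK, hχ⟩

lemma restrictsTo_top_of_imageIn_eq {ψ : ↥X →* ↥Y} (hψ : Function.Injective ψ) (hSX : S ≤ X)
    (himage : imageIn ψ S = S) : RestrictsTo ψ S ⊤ := by
  let f : ↥S →* G := Y.subtype.comp (ψ.comp (Subgroup.inclusion hSX))
  have hmaps : ∀ s, f s ∈ S := fun s => by
    have hs : f s ∈ imageIn ψ S := mem_imageIn.mpr ⟨s, s.2, mem_graph.mpr ⟨hSX s.2, rfl⟩⟩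
    rwa [himage] at hs
  have hf : Function.Injective f :=
    Y.subtype_injective.comp (hψ.comp (Subgroup.inclusion_injective hSX))
  let χ₀ : ↥S →* ↥S := f.codRestrict S hmaps
  have hχ₀ : Function.Bijective χ₀ := by
    refine ⟨fun s t hst => hf (congrArg Subtype.val hst :), fun s => ?_⟩
    have hs : (s : G) ∈ imageIn ψ S := by rw [himage]; exact s.2
    obtain ⟨a, ha, hmem⟩ := mem_imageIn.mp hs
    obtain ⟨_, has⟩ := mem_graph.mp hmem
    exact ⟨⟨a, ha⟩, Subtype.ext has⟩
  exact ⟨MulEquiv.ofBijective χ₀ hχ₀, Subgroup.mem_top _,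
    (graph_subset_graph_iff hSX).mpr fun _ _ _ => rfl⟩

lemma restrictsTo_top_iff {ψ : ↥X →* ↥Y} (hψ : Function.Injective ψ) :
    RestrictsTo ψ S ⊤ ↔ S ≤ X ∧ imageIn ψ S = S :=
  ⟨fun h => ⟨h.le, h.imageIn_eq⟩, fun ⟨hSX, himage⟩ => restrictsTo_top_of_imageIn_eq hψ hSX himage⟩

lemma RestrictsTo.sup {ψ : ↥X →* ↥Y} (hψ : Function.Injective ψ) {S₁ S₂ : Subgroup G}
    (h₁ : RestrictsTo ψ S₁ ⊤) (h₂ : RestrictsTo ψ S₂ ⊤) : RestrictsTo ψ (S₁ ⊔ S₂) ⊤ := by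
  rw [restrictsTo_top_iff hψ] at h₁ h₂ ⊢
  exact ⟨sup_le h₁.1 h₂.1, by rw [imageIn_sup ψ h₁.1 h₂.1, h₁.2, h₂.2]⟩

lemma graph_subset_graph_of_le {S' T' : Subgroup G} {ψ : ↥X →* ↥Y} {f : ↥S →* ↥S'}
    {g : ↥T →* ↥T'} (hST : S ≤ T) (hf : graph f ⊆ graph ψ) (hg : graph g ⊆ graph ψ) :
    graph f ⊆ graph g :=
  subset_of_dom_subset (fun _ _ _ => eq_of_mem_graph) hf hg (by rwa [dom_graph, dom_graph])

lemma eq_of_graph_subset {ψ : ↥X →* ↥Y} {α β : MulAut ↥T} (hα : graph α.toMonoidHom ⊆ graph ψ)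
    (hβ : graph β.toMonoidHom ⊆ graph ψ) : α = β := by
  have h := graph_subset_graph_of_le le_rfl hα hβ
  ext x
  obtain ⟨_, hx⟩ := mem_graph.mp (h (mem_graph.mpr ⟨x.2, rfl⟩))
  exact hx.symm

lemma restrictsTo_inf_iff {ψ : ↥X →* ↥Y} {K₁ K₂ : Subgroup (MulAut ↥T)} :
    RestrictsTo ψ T (K₁ ⊓ K₂) ↔ RestrictsTo ψ T K₁ ∧ RestrictsTo ψ T K₂ := by
  constructor
  · exact fun h => ⟨h.mono inf_le_left, h.mono inf_le_right⟩
  · rintro ⟨⟨α, hα₁, hα⟩, ⟨β, hβ₂, hβ⟩⟩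
    exact ⟨α, ⟨hα₁, eq_of_graph_subset hα hβ ▸ hβ₂⟩, hα⟩

def restrictsSubgroup (hST : S ≤ T) (K : Subgroup (MulAut ↥S)) : Subgroup (MulAut ↥T) where
  carrier := {α | RestrictsTo α.toMonoidHom S K}
  one_mem' := ⟨1, K.one_mem, graph_one_subset hST⟩
  mul_mem' := by
    rintro α β ⟨χ, hχ, hαχ⟩ ⟨χ', hχ', hβχ'⟩
    refine ⟨χ * χ', K.mul_mem hχ hχ', ?_⟩
    rw [graph_mul, graph_mul]
    exact SetRel.comp_subset_comp hβχ' hαχ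
  inv_mem' := by
    rintro α ⟨χ, hχ, hαχ⟩
    refine ⟨χ⁻¹, K.inv_mem hχ, ?_⟩
    rw [graph_inv, graph_inv]
    exact Set.preimage_mono hαχ

lemma restrictsTo_restrictsSubgroup_iff {ψ : ↥X →* ↥Y} (hST : S ≤ T) {K : Subgroup (MulAut ↥S)} :
    RestrictsTo ψ T (restrictsSubgroup hST K) ↔ RestrictsTo ψ T ⊤ ∧ RestrictsTo ψ S K := by
  constructor
  · rintro ⟨α, ⟨χ, hχK, hχα⟩, hα⟩
    exact ⟨⟨α, Subgroup.mem_top α, hα⟩, ⟨χ, hχK, hχα.trans hα⟩⟩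
  · rintro ⟨⟨α, -, hα⟩, ⟨χ, hχK, hχ⟩⟩
    exact ⟨α, ⟨χ, hχK, graph_subset_graph_of_le hST hχ hα⟩, hα⟩

end Restricts

section Lift

variable {G : Type*} [Group G] {N X Y : Subgroup G}

lemma coe_mem_liftSub {A : Subgroup ↥N} {y : ↥N} : (y : G) ∈ liftSub A ↔ y ∈ A :=
  Subgroup.mem_map_iff_mem N.subtype_injective

lemma liftSub_sup (A B : Subgroup ↥N) : liftSub (A ⊔ B) = liftSub A ⊔ liftSub B :=
  Subgroup.map_sup A B N.subtype

lemma liftSub_mono {A B : Subgroup ↥N} (h : A ≤ B) : liftSub A ≤ liftSub B :=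
  Subgroup.map_mono h

def liftRel (r : SetRel ↥N ↥N) : SetRel G G := Prod.map Subtype.val Subtype.val '' r

lemma liftRel_subset_liftRel_iff {r r' : SetRel ↥N ↥N} : liftRel r ⊆ liftRel r' ↔ r ⊆ r' :=
  Set.image_subset_image_iff (Subtype.val_injective.prodMap Subtype.val_injective)

lemma dom_liftRel (r : SetRel ↥N ↥N) : (liftRel r).dom = Subtype.val '' r.dom := by
  ext a
  simp only [liftRel, SetRel.mem_dom, Set.mem_image, Prod.exists, Prod.map, Prod.mk.injEq]
  constructor
  · rintro ⟨b, x, y, hxy, rfl, rfl⟩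
    exact ⟨x, ⟨y, hxy⟩, rfl⟩
  · rintro ⟨x, ⟨y, hxy⟩, rfl⟩
    exact ⟨y, x, y, hxy, rfl, rfl⟩

lemma liftRel_graph_subset_iff {S S' : Subgroup ↥N} {f : ↥S →* ↥S'} {ψ : ↥X →* ↥Y}
    (hSX : liftSub S ≤ X) : liftRel (graph f) ⊆ graph ψ ↔
      ∀ (x : ↥N) (hxS : x ∈ S) (hx : (x : G) ∈ X), (ψ ⟨x, hx⟩ : G) = ((f ⟨x, hxS⟩ : ↥N) : G) := by
  constructor
  · intro h x hxS hx
    obtain ⟨_, hψ⟩ := mem_graph.mp (h ⟨_, mem_graph.mpr ⟨hxS, rfl⟩, rfl⟩)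
    exact hψ
  · rintro h _ ⟨⟨x, y⟩, hxy, rfl⟩
    obtain ⟨hxS, rfl⟩ := mem_graph.mp hxy
    have hx : (x : G) ∈ X := hSX (coe_mem_liftSub.mpr hxS)
    exact mem_graph.mpr ⟨hx, h x hxS hx⟩

noncomputable def liftEquiv (A : Subgroup ↥N) : ↥A ≃* ↥(liftSub A) :=
  A.equivMapOfInjective N.subtype N.subtype_injective

lemma coe_liftEquiv_symm {A : Subgroup ↥N} (x : ↥(liftSub A)) :
    (((liftEquiv A).symm x : ↥N) : G) = x :=
  congrArg Subtype.val ((liftEquiv A).apply_symm_apply x)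

noncomputable def liftAut {R : Subgroup ↥N} (J : Subgroup (MulAut ↥R)) :
    Subgroup (MulAut ↥(liftSub R)) :=
  J.map (MulAut.congr (liftEquiv R))

lemma graph_congr_liftEquiv {R : Subgroup ↥N} (j : MulAut ↥R) :
    graph (MulAut.congr (liftEquiv R) j).toMonoidHom = liftRel (graph j.toMonoidHom) := by
  have hsub : liftRel (graph j.toMonoidHom) ⊆ graph (MulAut.congr (liftEquiv R) j).toMonoidHom := by
    refine (liftRel_graph_subset_iff le_rfl).mpr fun x hx _ => ?_
    change ((liftEquiv R (j ((liftEquiv R).symm (liftEquiv R ⟨x, hx⟩))) : ↥(liftSub R)) : G) = _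
    rw [MulEquiv.symm_apply_apply]
    rfl
  refine (subset_of_dom_subset (fun _ _ _ => eq_of_mem_graph) subset_rfl hsub ?_).antisymm hsub
  rw [dom_graph, dom_liftRel, dom_graph]
  rfl

lemma restrictsTo_liftAut_iff {R : Subgroup ↥N} {J : Subgroup (MulAut ↥R)} {ψ : ↥X →* ↥Y} :
    RestrictsTo ψ (liftSub R) (liftAut J) ↔ ∃ j ∈ J, liftRel (graph j.toMonoidHom) ⊆ graph ψ := by
  simp only [RestrictsTo, liftAut, Subgroup.mem_map]
  constructor
  · rintro ⟨_, ⟨j, hj, rfl⟩, h⟩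
    exact ⟨j, hj, graph_congr_liftEquiv j ▸ h⟩
  · rintro ⟨j, hj, h⟩
    exact ⟨_, ⟨j, hj, rfl⟩, (graph_congr_liftEquiv j).symm ▸ h⟩

end Lift

section Normalizer

variable {G : Type*} [Group G] {S T : Subgroup G}

lemma mem_NPK {K : Subgroup (MulAut ↥S)} {x : G} :
    x ∈ NPK S K ↔ ∃ h : x ∈ Subgroup.normalizer (S : Set G), conjAut S ⟨x, h⟩ ∈ K := by
  simp only [NPK, Subgroup.mem_map, Subgroup.mem_comap, Subgroup.coe_subtype]
  constructor
  · rintro ⟨y, hy, rfl⟩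
    exact ⟨y.2, hy⟩
  · rintro ⟨h, hK⟩
    exact ⟨⟨x, h⟩, hK, rfl⟩

lemma NPK_top (S : Subgroup G) : NPK S ⊤ = Subgroup.normalizer (S : Set G) := by
  ext x
  simp [mem_NPK]

lemma NPK_le_normalizer (K : Subgroup (MulAut ↥S)) : NPK S K ≤ Subgroup.normalizer (S : Set G) :=
  fun _ hx => (mem_NPK.mp hx).1

lemma NPK_inf (K₁ K₂ : Subgroup (MulAut ↥S)) : NPK S (K₁ ⊓ K₂) = NPK S K₁ ⊓ NPK S K₂ := by
  ext x
  simp only [mem_NPK, Subgroup.mem_inf]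
  exact ⟨fun ⟨h, h₁, h₂⟩ => ⟨⟨h, h₁⟩, ⟨h, h₂⟩⟩, fun ⟨⟨h, h₁⟩, ⟨_, h₂⟩⟩ => ⟨h, h₁, h₂⟩⟩

lemma restrictsTo_conjAut_iff (hST : S ≤ T) {K : Subgroup (MulAut ↥S)}
    (u : ↥(Subgroup.normalizer (T : Set G))) :
    RestrictsTo (conjAut T u).toMonoidHom S K ↔ (u : G) ∈ NPK S K := by
  rw [mem_NPK]
  constructor
  · rintro ⟨χ, hχK, hχ⟩
    have hconj : ∀ s : ↥S, (u : G) * s * (u : G)⁻¹ = χ s := fun s =>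
      (graph_subset_graph_iff hST).mp hχ s s.2 (hST s.2)
    have hu : (u : G) ∈ Subgroup.normalizer (S : Set G) := by
      refine Subgroup.mem_normalizer_iff.mpr fun x => ⟨fun hx => ?_, fun hx => ?_⟩
      · rw [hconj ⟨x, hx⟩]
        exact (χ ⟨x, hx⟩).2
      · obtain ⟨y, hy⟩ := χ.surjective ⟨_, hx⟩
        have hyx : (u : G) * y * (u : G)⁻¹ = (u : G) * x * (u : G)⁻¹ := by
          rw [hconj, hy]
        rw [← mul_left_cancel (mul_right_cancel hyx)]
        exact y.2
    refine ⟨hu, ?_⟩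
    convert hχK using 1
    ext s
    exact hconj s
  · rintro ⟨hu, hK⟩
    exact ⟨_, hK, (graph_subset_graph_iff hST).mpr fun _ _ _ => rfl⟩

lemma NPK_restrictsSubgroup (hST : S ≤ T) (K : Subgroup (MulAut ↥S)) :
    NPK T (restrictsSubgroup hST K) = NPK T ⊤ ⊓ NPK S K := by
  ext u
  simp only [Subgroup.mem_inf, mem_NPK (x := u) (S := T)]
  constructor
  · rintro ⟨hu, hK⟩
    exact ⟨⟨hu, Subgroup.mem_top _⟩, (restrictsTo_conjAut_iff hST ⟨u, hu⟩).mp hK⟩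
  · rintro ⟨⟨hu, -⟩, hK⟩
    exact ⟨hu, (restrictsTo_conjAut_iff hST ⟨u, hu⟩).mpr hK⟩

end Normalizer

section StabAut

variable {G : Type*} [Group G] {N : Subgroup G}

lemma coe_mem_normalizer_liftSub_iff {R : Subgroup ↥N} {v : ↥N} :
    (v : G) ∈ Subgroup.normalizer (liftSub R : Set G) ↔ v ∈ Subgroup.normalizer (R : Set ↥N) := by
  rw [Subgroup.mem_normalizer_iff_map_conj_eq, Subgroup.mem_normalizer_iff_map_conj_eq, liftSub,
    Subgroup.map_map, ← (Subgroup.map_injective N.subtype_injective).eq_iff, Subgroup.map_map]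
  rfl

lemma conjAut_liftSub {R : Subgroup ↥N} {v : ↥N} (hv : v ∈ Subgroup.normalizer (R : Set ↥N)) :
    conjAut (liftSub R) ⟨v, coe_mem_normalizer_liftSub_iff.mpr hv⟩ =
      MulAut.congr (liftEquiv R) (conjAut R ⟨v, hv⟩) := by
  refine eq_of_graph_subset (ψ := (conjAut (liftSub R) ⟨v, _⟩).toMonoidHom) subset_rfl ?_
  rw [graph_congr_liftEquiv, liftRel_graph_subset_iff le_rfl]
  intro x _ _
  rfl

lemma coe_mem_NPK_liftSub_iff {R : Subgroup ↥N} {J : Subgroup (MulAut ↥R)} {v : ↥N} :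
    (v : G) ∈ NPK (liftSub R) (liftAut J) ↔ v ∈ NPK R J := by
  rw [mem_NPK, mem_NPK]
  constructor
  · rintro ⟨hv, hJ⟩
    have hv' := coe_mem_normalizer_liftSub_iff.mp hv
    rw [conjAut_liftSub hv'] at hJ
    exact ⟨hv', (Subgroup.mem_map_iff_mem (MulAut.congr (liftEquiv R)).injective).mp hJ⟩
  · rintro ⟨hv, hJ⟩
    refine ⟨coe_mem_normalizer_liftSub_iff.mpr hv, ?_⟩
    rw [conjAut_liftSub hv]
    exact Subgroup.mem_map_of_mem _ hJ

lemma liftSub_NPK (R : Subgroup ↥N) (J : Subgroup (MulAut ↥R)) :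
    liftSub (NPK R J) = N ⊓ NPK (liftSub R) (liftAut J) := by
  ext u
  simp only [liftSub, Subgroup.mem_map, Subgroup.mem_inf, Subgroup.coe_subtype]
  constructor
  · rintro ⟨v, hv, rfl⟩
    exact ⟨v.2, coe_mem_NPK_liftSub_iff.mpr hv⟩
  · rintro ⟨hu, hJ⟩
    exact ⟨⟨u, hu⟩, coe_mem_NPK_liftSub_iff.mp hJ, rfl⟩

lemma map_subgroupOf_eq_iff {S T : Subgroup G} (hST : S ≤ T) (α : MulAut ↥T) :
    (S.subgroupOf T).map α.toMonoidHom = S.subgroupOf T ↔ imageIn α.toMonoidHom S = S := by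
  have hS : (S.subgroupOf T).map T.subtype = S := by
    rw [Subgroup.subgroupOf_map_subtype, inf_of_le_left hST]
  calc _ ↔ ((S.subgroupOf T).map α.toMonoidHom).map T.subtype = (S.subgroupOf T).map T.subtype :=
        (Subgroup.map_injective T.subtype_injective).eq_iff.symm
    _ ↔ _ := by rw [hS, imageIn, Subgroup.map_map]

lemma stabAut_eq (Q : Subgroup G) (R : Subgroup ↥N) (J : Subgroup (MulAut ↥R)) :
    stabAut Q R J = restrictsSubgroup (le_sup_left : Q ≤ Q ⊔ liftSub R) ⊤ ⊓
      restrictsSubgroup (le_sup_right : liftSub R ≤ Q ⊔ liftSub R) (liftAut J) := by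
  refine le_antisymm ((Subgroup.closure_le _).mpr ?_) fun α hα => Subgroup.subset_closure ?_
  · rintro α ⟨hQ, -, j, hj, hαj⟩
    refine ⟨restrictsTo_top_of_imageIn_eq α.injective le_sup_left
      ((map_subgroupOf_eq_iff le_sup_left α).mp hQ), restrictsTo_liftAut_iff.mpr ⟨j, hj, ?_⟩⟩
    exact (liftRel_graph_subset_iff le_sup_right).mpr hαj
  · obtain ⟨hQ, hR⟩ := hα
    obtain ⟨j, hj, hαj⟩ := restrictsTo_liftAut_iff.mp hR
    exact ⟨(map_subgroupOf_eq_iff le_sup_left α).mpr hQ.imageIn_eq,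
      (map_subgroupOf_eq_iff le_sup_right α).mpr hR.imageIn_eq, j, hj,
      (liftRel_graph_subset_iff le_sup_right).mp hαj⟩

theorem NPK_stabAut_eq (Q : Subgroup G) (R : Subgroup ↥(NPK Q ⊤)) (J : Subgroup (MulAut ↥R)) :
    NPK (Q ⊔ liftSub R) (stabAut Q R J) = liftSub (NPK R J) := by
  have hnorm : NPK Q ⊤ ⊓ NPK (liftSub R) (liftAut J) ≤ NPK (Q ⊔ liftSub R) ⊤ :=
    (inf_le_inf (NPK_le_normalizer _) (NPK_le_normalizer _)).trans
      ((Subgroup.normalizer_inf_normalizer_le_normalizer_sup _ _).trans (NPK_top _).ge)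
  rw [stabAut_eq, NPK_inf, NPK_restrictsSubgroup, NPK_restrictsSubgroup, liftSub_NPK]
  exact le_antisymm (le_inf (inf_le_left.trans inf_le_right) (inf_le_right.trans inf_le_right))
    (le_inf (le_inf hnorm inf_le_left) (le_inf hnorm inf_le_right))

end StabAut

section Morphisms

variable {G : Type*} [Group G] {N X Y : Subgroup G}

lemma mem_liftRel {r : SetRel ↥N ↥N} {a b : G} :
    (a, b) ∈ liftRel r ↔ ∃ x y : ↥N, (x, y) ∈ r ∧ (x : G) = a ∧ (y : G) = b := by
  simp [liftRel]

lemma exists_liftRel_graph_subset {X' Y' : Subgroup ↥N} (ψ : ↥X →* ↥Y) (hX : liftSub X' ≤ X)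
    (himage : imageIn ψ (liftSub X') ≤ liftSub Y') :
    ∃ ψ' : ↥X' →* ↥Y', liftRel (graph ψ') ⊆ graph ψ := by
  let f : ↥X' →* G :=
    Y.subtype.comp (ψ.comp ((Subgroup.inclusion hX).comp (liftEquiv X').toMonoidHom))
  have hf : ∀ x, f x ∈ liftSub Y' := fun x =>
    himage (mem_imageIn.mpr ⟨_, (liftEquiv X' x).2, mem_graph.mpr ⟨hX (liftEquiv X' x).2, rfl⟩⟩)
  refine ⟨(liftEquiv Y').symm.toMonoidHom.comp (f.codRestrict _ hf), ?_⟩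
  refine (liftRel_graph_subset_iff hX).mpr fun x hxS hx => ?_
  simp only [MonoidHom.comp_apply, MulEquiv.coe_toMonoidHom, coe_liftEquiv_symm]
  rfl

lemma mem_NFK_hom_iff {F : PCat G} {Q : Subgroup G} {K : Subgroup (MulAut ↥Q)}
    {A B : Subgroup ↥(NPK Q K)} {φ : ↥B →* ↥A} :
    φ ∈ (NFK F Q K).Hom A B ↔ ∃ ψ ∈ F.Hom (Q ⊔ liftSub A) (Q ⊔ liftSub B),
      RestrictsTo ψ Q K ∧ liftRel (graph φ) ⊆ graph ψ := by
  simp only [NFK, RestrictsTo, graph_subset_graph_iff le_sup_left,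
    liftRel_graph_subset_iff le_sup_right]
  constructor
  · rintro ⟨ψ, hψ, χ, hχ, hQ, hB⟩
    exact ⟨ψ, hψ, ⟨χ, hχ, hQ⟩, fun y hyB hy => hB ⟨y, hyB⟩ hy⟩
  · rintro ⟨ψ, hψ, ⟨χ, hχ, hQ⟩, hB⟩
    exact ⟨ψ, hψ, χ, hχ, hQ, fun y hy => hB y y.2 hy⟩

lemma restrictsTo_stabAut_iff {Q : Subgroup G} {R : Subgroup ↥N} {J : Subgroup (MulAut ↥R)}
    {ψ : ↥X →* ↥Y} (hψ : Function.Injective ψ) :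
    RestrictsTo ψ (Q ⊔ liftSub R) (stabAut Q R J) ↔
      RestrictsTo ψ Q ⊤ ∧ RestrictsTo ψ (liftSub R) (liftAut J) := by
  rw [stabAut_eq, restrictsTo_inf_iff, restrictsTo_restrictsSubgroup_iff,
    restrictsTo_restrictsSubgroup_iff]
  constructor
  · rintro ⟨⟨-, hQ⟩, -, hR⟩
    exact ⟨hQ, hR⟩
  · rintro ⟨hQ, hR⟩
    have hT := hQ.sup hψ (hR.mono le_top)
    exact ⟨⟨hT, hQ⟩, hT, hR⟩

lemma mem_NFK_stabAut_hom_iff {F : PCat G} (hF : F.IsDivisible) {Q : Subgroup G}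
    {R : Subgroup ↥N} {J : Subgroup (MulAut ↥R)}
    {A B : Subgroup ↥(NPK (Q ⊔ liftSub R) (stabAut Q R J))} {φ : ↥B →* ↥A} :
    φ ∈ (NFK F (Q ⊔ liftSub R) (stabAut Q R J)).Hom A B ↔
      ∃ ψ ∈ F.Hom (Q ⊔ liftSub R ⊔ liftSub A) (Q ⊔ liftSub R ⊔ liftSub B),
        RestrictsTo ψ Q ⊤ ∧ RestrictsTo ψ (liftSub R) (liftAut J) ∧
          liftRel (graph φ) ⊆ graph ψ := by
  rw [mem_NFK_hom_iff]
  refine exists_congr fun ψ => and_congr_right fun hψ => ?_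
  rw [← and_assoc, restrictsTo_stabAut_iff (hF.inj hψ)]

lemma mem_NFK_NFK_hom_iff {F : PCat G} {Q : Subgroup G} {K : Subgroup (MulAut ↥Q)}
    {R : Subgroup ↥(NPK Q K)} {J : Subgroup (MulAut ↥R)} {A' B' : Subgroup ↥(NPK R J)}
    {φ' : ↥B' →* ↥A'} :
    φ' ∈ (NFK (NFK F Q K) R J).Hom A' B' ↔
      ∃ ψ ∈ F.Hom (Q ⊔ liftSub (R ⊔ liftSub A')) (Q ⊔ liftSub (R ⊔ liftSub B')),
        RestrictsTo ψ Q K ∧ RestrictsTo ψ (liftSub R) (liftAut J) ∧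
          liftRel (liftRel (graph φ')) ⊆ graph ψ := by
  rw [mem_NFK_hom_iff]
  constructor
  · rintro ⟨ψ', hψ', ⟨j, hj, hjψ'⟩, hφ'ψ'⟩
    obtain ⟨ψ, hψ, hQ, hψ'ψ⟩ := mem_NFK_hom_iff.mp hψ'
    exact ⟨ψ, hψ, hQ, restrictsTo_liftAut_iff.mpr
      ⟨j, hj, (liftRel_subset_liftRel_iff.mpr hjψ').trans hψ'ψ⟩,
      (liftRel_subset_liftRel_iff.mpr hφ'ψ').trans hψ'ψ⟩
  · rintro ⟨ψ, hψ, hQ, hR, hφ'ψ⟩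
    obtain ⟨j, hj, hjψ⟩ := restrictsTo_liftAut_iff.mp hR
    have himage : imageIn ψ (liftSub (R ⊔ liftSub B')) ≤ liftSub (R ⊔ liftSub A') := by
      have hB'X : liftSub (liftSub B') ≤ Q ⊔ liftSub (R ⊔ liftSub B') :=
        (liftSub_mono le_sup_right).trans le_sup_right
      rw [congrArg (imageIn ψ) (liftSub_sup _ _), imageIn_sup ψ hR.le hB'X, hR.imageIn_eq]
      refine (sup_le_sup_left (imageIn_le hφ'ψ fun a ha => ?_) _).trans (liftSub_sup _ _).ge
      obtain ⟨x, hx, rfl⟩ := Subgroup.mem_map.mp ha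
      obtain ⟨y, hy, rfl⟩ := Subgroup.mem_map.mp hx
      exact ⟨_, coe_mem_liftSub.mpr (coe_mem_liftSub.mpr (φ' ⟨y, hy⟩).2),
        mem_liftRel.mpr ⟨_, _, mem_liftRel.mpr ⟨_, _, mem_graph.mpr ⟨hy, rfl⟩, rfl, rfl⟩, rfl, rfl⟩⟩
    obtain ⟨ψ', hψ'ψ⟩ := exists_liftRel_graph_subset ψ le_sup_right himage
    have hψfun : ∀ ⦃a b c⦄, (a, b) ∈ graph ψ → (a, c) ∈ graph ψ → b = c :=
      fun _ _ _ => eq_of_mem_graph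
    refine ⟨ψ', mem_NFK_hom_iff.mpr ⟨ψ, hψ, hQ, hψ'ψ⟩, ⟨j, hj, ?_⟩, ?_⟩
    · refine liftRel_subset_liftRel_iff.mp (subset_of_dom_subset hψfun hjψ hψ'ψ ?_)
      rw [dom_liftRel, dom_liftRel, dom_graph, dom_graph]
      exact Set.image_mono (SetLike.coe_subset_coe.mpr le_sup_left)
    · refine liftRel_subset_liftRel_iff.mp (subset_of_dom_subset hψfun hφ'ψ hψ'ψ ?_)
      rw [dom_liftRel, dom_liftRel, dom_liftRel, dom_graph, dom_graph]
      exact Set.image_mono (SetLike.coe_subset_coe.mpr (le_sup_right : liftSub B' ≤ _))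

lemma liftRel_graph_eq_of_forall_coe_eq {M : Subgroup G} {M' : Subgroup ↥N}
    {A B : Subgroup ↥M} {A' B' : Subgroup ↥M'} (φ : ↥B →* ↥A) (φ' : ↥B' →* ↥A')
    (hB : liftSub B = liftSub (liftSub B'))
    (hφ : ∀ (x : ↥B) (y : ↥B'), ((x : ↥M) : G) = (((y : ↥M') : ↥N) : G) →
      ((φ x : ↥M) : G) = (((φ' y : ↥M') : ↥N) : G)) :
    liftRel (graph φ) = liftRel (liftRel (graph φ')) := by
  ext ⟨a, b⟩
  constructor
  · intro hab
    obtain ⟨x, _, hx, rfl, rfl⟩ := mem_liftRel.mp hab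
    obtain ⟨hxB, rfl⟩ := mem_graph.mp hx
    have hx' : (x : G) ∈ liftSub (liftSub B') := hB ▸ coe_mem_liftSub.mpr hxB
    obtain ⟨z, hz, hzx⟩ := Subgroup.mem_map.mp hx'
    obtain ⟨w, hw, rfl⟩ := Subgroup.mem_map.mp hz
    refine mem_liftRel.mpr
      ⟨_, _, mem_liftRel.mpr ⟨w, _, mem_graph.mpr ⟨hw, rfl⟩, rfl, rfl⟩, hzx, ?_⟩
    exact (hφ ⟨x, hxB⟩ ⟨w, hw⟩ hzx.symm).symm
  · intro hab
    obtain ⟨z, _, hz, rfl, rfl⟩ := mem_liftRel.mp hab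
    obtain ⟨w, _, hw, rfl, rfl⟩ := mem_liftRel.mp hz
    obtain ⟨hwB, rfl⟩ := mem_graph.mp hw
    have hw' : ((w : ↥N) : G) ∈ liftSub B := hB ▸ coe_mem_liftSub.mpr (coe_mem_liftSub.mpr hwB)
    obtain ⟨x, hxB, hxw⟩ := Subgroup.mem_map.mp hw'
    exact mem_liftRel.mpr ⟨x, _, mem_graph.mpr ⟨hxB, rfl⟩, hxw, hφ ⟨x, hxB⟩ ⟨w, hwB⟩ hxw⟩

end Morphisms

theorem normalizer_category_eq_general
    {P : Type*} [Group P]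
    (F : PCat P) (hF : F.IsDivisible)
    (Q : Subgroup P)
    (R : Subgroup ↥(NPK Q (⊤ : Subgroup (MulAut ↥Q)))) (J : Subgroup (MulAut ↥R)) :
    NPK (Q ⊔ liftSub R) (stabAut Q R J) = liftSub (NPK R J) ∧
    ∀ (A B : Subgroup ↥(NPK (Q ⊔ liftSub R) (stabAut Q R J)))
      (A' B' : Subgroup ↥(NPK R J)),
      liftSub A = liftSub (liftSub A') → liftSub B = liftSub (liftSub B') →
      ∀ (φ : ↥B →* ↥A) (φ' : ↥B' →* ↥A'),
        (∀ (x : ↥B) (y : ↥B'),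
          ((x : ↥(NPK (Q ⊔ liftSub R) (stabAut Q R J))) : P) =
            (((y : ↥(NPK R J)) : ↥(NPK Q (⊤ : Subgroup (MulAut ↥Q)))) : P) →
          ((φ x : ↥(NPK (Q ⊔ liftSub R) (stabAut Q R J))) : P) =
            (((φ' y : ↥(NPK R J)) : ↥(NPK Q (⊤ : Subgroup (MulAut ↥Q)))) : P)) →
        (φ ∈ (NFK F (Q ⊔ liftSub R) (stabAut Q R J)).Hom A B ↔
          φ' ∈ (NFK (NFK F Q ⊤) R J).Hom A' B') := by
  refine ⟨NPK_stabAut_eq Q R J, fun A B A' B' hA hB φ φ' hφ => ?_⟩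
  rw [mem_NFK_stabAut_hom_iff hF, mem_NFK_NFK_hom_iff, liftSub_sup, liftSub_sup, ← sup_assoc,
    ← sup_assoc, ← hA, ← hB, liftRel_graph_eq_of_forall_coe_eq φ φ' hB hφ]

/-- **3.8.1**: with `P' = N_P(Q)`, `F' = N_F(Q)`, `T = Q·R` and `I` as above, one has
`N_P^I(T) = N_{P'}^J(R)` and `N_F^I(T) = N_{F'}^J(R)`. -/
theorem normalizer_category_eq
    (p : ℕ) [Fact p.Prime] {P : Type*} [Group P] [Finite P] (hP : IsPGroup p P)
    (F : PCat P) (hF : F.IsDivisible)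
    (Q : Subgroup P) (hQ : FullyKNormalized F Q ⊤)
    (R : Subgroup ↥(NPK Q (⊤ : Subgroup (MulAut ↥Q)))) (J : Subgroup (MulAut ↥R))
    (hRJ : FullyKNormalized (NFK F Q ⊤) R J) :
    NPK (Q ⊔ liftSub R) (stabAut Q R J) = liftSub (NPK R J) ∧
    ∀ (A B : Subgroup ↥(NPK (Q ⊔ liftSub R) (stabAut Q R J)))
      (A' B' : Subgroup ↥(NPK R J)),
      liftSub A = liftSub (liftSub A') → liftSub B = liftSub (liftSub B') →
      ∀ (φ : ↥B →* ↥A) (φ' : ↥B' →* ↥A'),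
        (∀ (x : ↥B) (y : ↥B'),
          ((x : ↥(NPK (Q ⊔ liftSub R) (stabAut Q R J))) : P) =
            (((y : ↥(NPK R J)) : ↥(NPK Q (⊤ : Subgroup (MulAut ↥Q)))) : P) →
          ((φ x : ↥(NPK (Q ⊔ liftSub R) (stabAut Q R J))) : P) =
            (((φ' y : ↥(NPK R J)) : ↥(NPK Q (⊤ : Subgroup (MulAut ↥Q)))) : P)) →
        (φ ∈ (NFK F (Q ⊔ liftSub R) (stabAut Q R J)).Hom A B ↔
          φ' ∈ (NFK (NFK F Q ⊤) R J).Hom A' B') :=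
  normalizer_category_eq_general F hF Q R J

end Puig
end

section
/- Let F be a divisible P-category and Q a normal subgroup of P such that, for every subgroup R of P, every morphism φ ∈ F(P,R) extends to a morphism ψ ∈ F(P, Q·R) with ψ(Q) = Q and ψ(x) = φ(x) for all x ∈ R (i.e. N_F(Q) = F). Then every F-intersected subgroup R of P contains Q. -/
namespace Puig

variable {G : Type*} [Group G]

/-! If `Q ⊄ R`, then `R < QR` in the `p`-group `QR`, so some `n = qr ∈ N_{QR}(R) \ R` exists,
and then `q ∈ Q ∩ N_P(R) \ R`. Extending any `φ ∈ F(P,R)` to `ψ` on `QR` shows that conjugation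
by `q` on `R` is transported by `φ` to conjugation by `ψ(q) ∈ N_P(φ(R))`; since `R` is
intersected, conjugation by `q` is conjugation by some `v ∈ R`. Then `v⁻¹q ∈ C_P(R) ≤ R`,
so `q ∈ R`, a contradiction. -/

open Subgroup

lemma exists_mem_normalizer_not_mem_of_lt {R S : Subgroup G} (hS : NormalizerCondition S)
    (hRS : R < S) : ∃ n ∈ S, n ∈ normalizer (R : Set G) ∧ n ∉ R := by
  have hlt : R.subgroupOf S < ⊤ :=
    lt_top_iff_ne_top.mpr fun h => hRS.not_ge (subgroupOf_eq_top.mp h)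
  obtain ⟨n, hn, hnR⟩ := SetLike.exists_of_lt (hS _ hlt)
  rw [← subgroupOf_normalizer_eq hRS.le, mem_subgroupOf] at hn
  exact ⟨n, n.2, hn, fun h => hnR (mem_subgroupOf.mpr h)⟩

lemma exists_mem_normal_normalizer_not_mem {Q R : Subgroup G} [Q.Normal]
    (hnc : NormalizerCondition ↥(Q ⊔ R)) (hle : ¬ Q ≤ R) :
    ∃ q ∈ Q, q ∈ normalizer (R : Set G) ∧ q ∉ R := by
  have hlt : R < Q ⊔ R := lt_of_le_of_ne le_sup_right fun h => hle (h ▸ le_sup_left)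
  obtain ⟨n, hn, hnN, hnR⟩ := exists_mem_normalizer_not_mem_of_lt hnc hlt
  obtain ⟨q, hq, r, hr, rfl⟩ := mem_sup_of_normal_left.mp hn
  refine ⟨q, hq, ?_, fun hqR => hnR (mul_mem hqR hr)⟩
  simpa using mul_mem hnN (inv_mem (le_normalizer hr))

lemma mem_img {Q R : Subgroup G} (φ : ↥Q →* ↥R) {y : G} :
    y ∈ img φ ↔ ∃ x, (φ x : G) = y := by
  simp only [img, mem_map, MonoidHom.mem_range, coe_subtype]
  constructor
  · rintro ⟨z, ⟨x, rfl⟩, rfl⟩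
    exact ⟨x, rfl⟩
  · rintro ⟨x, rfl⟩
    exact ⟨φ x, ⟨x, rfl⟩, rfl⟩

lemma img_inclP (R : Subgroup G) : img (inclP R) = R := by
  ext y
  simp [mem_img, inclP]

lemma inclP_mem_hom {F : PCat G} (hF : F.IsDivisible) (R : Subgroup G) :
    inclP R ∈ F.Hom ⊤ R := by
  convert hF.conj_mem 1 fun _ _ => mem_top _
  ext
  simp [conjMap, inclP]

lemma SelfCentralizing.centralizer_le {F : PCat G} (hF : F.IsDivisible) {R : Subgroup G}
    (hR : SelfCentralizing F R) : centralizer (R : Set G) ≤ R := by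
  have h := hR _ (inclP_mem_hom hF R)
  rw [img_inclP] at h
  exact h.le.trans (map_subtype_le _)

lemma mem_of_conjAut_mem_conjF {R : Subgroup G} (hC : centralizer (R : Set G) ≤ R) {q : G}
    (hq : q ∈ normalizer (R : Set G)) (h : conjAut R ⟨q, hq⟩ ∈ conjF R R) : q ∈ R := by
  obtain ⟨v, hvR, hv⟩ := h
  have hvq : (v : G)⁻¹ * q ∈ centralizer (R : Set G) := by
    rw [mem_centralizer_iff]
    intro m hm
    have hm' : (v : G) * m * (v : G)⁻¹ = q * m * q⁻¹ := by
      simpa [conjHomN, conjAut] using congrArg (fun α : MulAut R => ((α ⟨m, hm⟩ : R) : G)) hv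
    calc m * ((v : G)⁻¹ * q) = (v : G)⁻¹ * ((v : G) * m * (v : G)⁻¹) * q := by group
      _ = (v : G)⁻¹ * q * m := by rw [hm']; group
  simpa using mul_mem (mem_subgroupOf.mp hvR) (hC hvq)

lemma conjAut_mem_pullK {R S : Subgroup G} (hRS : R ≤ S) {q : G} (hqS : q ∈ S)
    (hq : q ∈ normalizer (R : Set G)) {φ : ↥R →* ↥(⊤ : Subgroup G)}
    {ψ : ↥S →* ↥(⊤ : Subgroup G)} (hψ : ∀ x : R, ψ (inclusion hRS x) = φ x) :
    conjAut R ⟨q, hq⟩ ∈ pullK φ (conjF ⊤ (img φ)) := by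
  set α := conjAut R ⟨q, hq⟩
  set w : G := (ψ ⟨q, hqS⟩ : G)
  have hconj : ∀ x : R, (φ (α x) : G) = w * φ x * w⁻¹ := by
    intro x
    have hx : inclusion hRS (α x) = ⟨q, hqS⟩ * inclusion hRS x * ⟨q, hqS⟩⁻¹ := rfl
    rw [← hψ, ← hψ, hx, map_mul, map_mul, map_inv]
    rfl
  have hw : w ∈ normalizer (img φ : Set G) := by
    refine mem_normalizer_iff.mpr fun y => ⟨?_, ?_⟩
    · intro hy
      obtain ⟨x, rfl⟩ := (mem_img φ).mp hy
      exact (mem_img φ).mpr ⟨α x, hconj x⟩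
    · intro hy
      obtain ⟨x, hx⟩ := (mem_img φ).mp hy
      refine (mem_img φ).mpr ⟨α.symm x, ?_⟩
      have h := hconj (α.symm x)
      rw [MulEquiv.apply_symm_apply, hx] at h
      exact mul_left_cancel (mul_right_cancel h.symm)
  exact subset_closure ⟨conjHomN (img φ) ⟨w, hw⟩,
    ⟨⟨w, hw⟩, mem_subgroupOf.mpr (mem_top _), rfl⟩, fun x => Subtype.ext (hconj x)⟩

/-- **3.11**: if `Q` is a normal subgroup of `P` with `N_F(Q) = F` (every morphism of `F`
extends to one stabilizing `Q`), then every `F`-intersected subgroup of `P` contains `Q`. -/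
theorem intersected_contains_normal
    (p : ℕ) [Fact p.Prime] {P : Type*} [Group P] [Finite P] (hP : IsPGroup p P)
    (F : PCat P) (hF : F.IsDivisible)
    (Q : Subgroup P) (hQn : Q.Normal)
    (hN : ∀ (R : Subgroup P) (φ : ↥R →* ↥(⊤ : Subgroup P)), φ ∈ F.Hom ⊤ R →
      ∃ ψ ∈ F.Hom ⊤ (Q ⊔ R),
        ((Q.subgroupOf (Q ⊔ R)).map ψ).map (⊤ : Subgroup P).subtype = Q ∧
        ∀ (x : ↥R) (hx : (x : P) ∈ Q ⊔ R), ψ ⟨(x : P), hx⟩ = φ x) :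
    ∀ R : Subgroup P, Intersected F R → Q ≤ R := by
  rintro R ⟨hSC, hInt⟩
  by_contra hle
  have := (hP.to_subgroup (Q ⊔ R)).isNilpotent
  obtain ⟨q, hq, hqN, hqR⟩ :=
    exists_mem_normal_normalizer_not_mem Group.normalizerCondition_of_isNilpotent hle
  refine hqR (mem_of_conjAut_mem_conjF (hSC.centralizer_le hF) hqN ?_)
  rw [hInt, mem_iInf]
  rintro ⟨φ, hφ⟩
  obtain ⟨ψ, -, -, hψ⟩ := hN R φ hφ
  exact conjAut_mem_pullK le_sup_right (mem_sup_left hq) hqN fun x => hψ x _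

end Puig
end
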